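/- arXiv:2206.10399 — 5 statements merged into one kernel-verified Lean document; each statement's English description precedes it below -/
import Mathlib

section
/- Let s > 0, A > 0, δ > 0 and 0 ≤ b ≤ 1, and set δ_* = min(δ, 1). Then ∫_0^s e^{-(s-σ)A} σ^{δ-1} dσ ≤ 4 δ_*^{-1} A^{-b} s^{δ-b}. -/
open MeasureTheory

set_option maxHeartbeats 1000000

/-- Lemma on time integrals of the heat kernel type:
Let `s > 0`, `A > 0`, `δ > 0` and `0 ≤ b ≤ 1`, and set `δ_* = min δ 1`. Then
`∫_0^s e^{-(s-σ)A} σ^{δ-1} dσ ≤ 4 δ_*⁻¹ A^{-b} s^{δ-b}`. -/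
theorem stmt_0 (s A δ b : ℝ) (hs : 0 < s) (hA : 0 < A) (hδ : 0 < δ)
    (hb0 : 0 ≤ b) (hb1 : b ≤ 1) :
    ∫ σ in Set.Ioo (0 : ℝ) s, Real.exp (-(s - σ) * A) * σ ^ (δ - 1) ≤
      4 * (min δ 1)⁻¹ * A ^ (-b) * s ^ (δ - b) := by
  have hm : (0:ℝ) < min δ 1 := lt_min hδ one_pos
  have hminv1 : (1:ℝ) ≤ (min δ 1)⁻¹ := by
    simpa using inv_anti₀ hm (min_le_right δ 1)
  have hδinv : δ⁻¹ ≤ (min δ 1)⁻¹ := by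
    apply inv_anti₀ hm (min_le_left _ _)
  have hsδ : (0:ℝ) < s ^ δ := Real.rpow_pos_of_pos hs δ
  have hsδ1 : (0:ℝ) < s ^ (δ - 1) := Real.rpow_pos_of_pos hs _
  -- integrability of σ^(δ-1) on Ioo 0 t for 0 ≤ t ≤ s
  have hrint : ∀ t u : ℝ, IntegrableOn (fun σ : ℝ => σ ^ (δ - 1)) (Set.Ioo t u) := by
    intro t u
    have h := intervalIntegral.intervalIntegrable_rpow' (a := t) (b := u)
      (r := δ - 1) (by linarith)
    rcases le_total t u with h' | h'
    · exact ((intervalIntegrable_iff_integrableOn_Ioc_of_le h').mp h).mono_set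
        Set.Ioo_subset_Ioc_self
    · simp [Set.Ioo_eq_empty_of_le h']
  -- integrability of the full integrand
  have hint : ∀ t u : ℝ, IntegrableOn
      (fun σ : ℝ => Real.exp (-(s - σ) * A) * σ ^ (δ - 1)) (Set.Ioo t u) := by
    intro t u
    have h := intervalIntegral.intervalIntegrable_rpow' (a := t) (b := u)
      (r := δ - 1) (by linarith)
    have hc : ContinuousOn (fun σ : ℝ => Real.exp (-(s - σ) * A)) (Set.uIcc t u) := by
      fun_prop
    have h2 := h.continuousOn_mul hc
    rcases le_total t u with h' | h'
    · exact ((intervalIntegrable_iff_integrableOn_Ioc_of_le h').mp h2).mono_set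
        Set.Ioo_subset_Ioc_self
    · simp [Set.Ioo_eq_empty_of_le h']
  -- value of ∫ σ^(δ-1) on Ioo 0 t
  have hrval : ∀ t : ℝ, 0 ≤ t → ∫ σ in Set.Ioo (0:ℝ) t, σ ^ (δ - 1) = t ^ δ / δ := by
    intro t ht
    rw [← MeasureTheory.integral_Ioc_eq_integral_Ioo,
      ← intervalIntegral.integral_of_le ht,
      integral_rpow (Or.inl (by linarith))]
    rw [show δ - 1 + 1 = δ by ring, Real.zero_rpow hδ.ne', sub_zero]
  -- Lemma L1 : crude bound
  have L1 : ∫ σ in Set.Ioo (0:ℝ) s, Real.exp (-(s - σ) * A) * σ ^ (δ - 1)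
      ≤ δ⁻¹ * s ^ δ := by
    have hb : ∫ σ in Set.Ioo (0:ℝ) s, Real.exp (-(s - σ) * A) * σ ^ (δ - 1)
        ≤ ∫ σ in Set.Ioo (0:ℝ) s, σ ^ (δ - 1) := by
      apply setIntegral_mono_on (hint 0 s) (hrint 0 s) measurableSet_Ioo
      intro σ hσ
      have h1 : Real.exp (-(s - σ) * A) ≤ 1 := by
        apply Real.exp_le_one_iff.mpr
        nlinarith [hσ.2]
      have h2 : (0:ℝ) ≤ σ ^ (δ - 1) := Real.rpow_nonneg hσ.1.le _
      nlinarith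
    rw [hrval s hs.le] at hb
    calc _ ≤ s ^ δ / δ := hb
    _ = δ⁻¹ * s ^ δ := by ring
  -- Lemma L2 : splitting bound
  have L2 : ∫ σ in Set.Ioo (0:ℝ) s, Real.exp (-(s - σ) * A) * σ ^ (δ - 1)
      ≤ 4 * (min δ 1)⁻¹ * s ^ (δ - 1) * A⁻¹ := by
    have hsplit : Set.Ioo (0:ℝ) s = Set.Ioo 0 (s/2) ∪ Set.Ico (s/2) s := by
      rw [Set.Ioo_union_Ico_eq_Ioo (by linarith) (by linarith)]
    have hintIco : IntegrableOn
        (fun σ : ℝ => Real.exp (-(s - σ) * A) * σ ^ (δ - 1)) (Set.Ico (s/2) s) := by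
      have := hint 0 s
      apply this.mono_set
      intro x hx
      exact ⟨by linarith [hx.1], hx.2⟩
    rw [hsplit, setIntegral_union (by
        intro u hu1 hu2 x hx
        exact absurd ((hu2 hx).1) (not_le.mpr (hu1 hx).2)) measurableSet_Ico
      (hint 0 (s/2)) hintIco]
    -- piece 1
    have P1 : ∫ σ in Set.Ioo (0:ℝ) (s/2), Real.exp (-(s - σ) * A) * σ ^ (δ - 1)
        ≤ 2 * (min δ 1)⁻¹ * s ^ (δ - 1) * A⁻¹ := by
      have hb : ∫ σ in Set.Ioo (0:ℝ) (s/2), Real.exp (-(s - σ) * A) * σ ^ (δ - 1)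
          ≤ ∫ σ in Set.Ioo (0:ℝ) (s/2), Real.exp (-(s/2) * A) * σ ^ (δ - 1) := by
        apply setIntegral_mono_on (hint 0 (s/2))
          ((hrint 0 (s/2)).const_mul _) measurableSet_Ioo
        intro σ hσ
        have h1 : Real.exp (-(s - σ) * A) ≤ Real.exp (-(s/2) * A) := by
          apply Real.exp_le_exp.mpr
          nlinarith [hσ.2]
        have h2 : (0:ℝ) ≤ σ ^ (δ - 1) := Real.rpow_nonneg hσ.1.le _
        nlinarith
      rw [integral_const_mul, hrval (s/2) (by linarith)] at hb
      have hexp : Real.exp (-(s/2) * A) ≤ 2 / (s * A) := by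
        rw [show -(s/2)*A = -(s/2*A) by ring, Real.exp_neg]
        rw [div_eq_mul_inv]
        have h1 : s/2 * A ≤ Real.exp (s/2 * A) := by
          have := Real.add_one_le_exp (s/2 * A)
          linarith
        have h2 : (0:ℝ) < s/2 * A := by positivity
        calc (Real.exp (s/2 * A))⁻¹ ≤ (s/2*A)⁻¹ := by
              apply inv_anti₀ h2 h1
        _ = 2 * (s*A)⁻¹ := by rw [show s/2*A = s*A/2 by ring, inv_div, div_eq_mul_inv]
      have hps : (s/2) ^ δ ≤ s ^ δ := Real.rpow_le_rpow (by linarith) (by linarith) hδ.le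
      have key : Real.exp (-(s/2) * A) * ((s/2) ^ δ / δ)
          ≤ 2 / (s*A) * (s ^ δ / δ) := by
        have e1 : (0:ℝ) ≤ (s/2) ^ δ / δ := by positivity
        have e2 : (0:ℝ) ≤ 2 / (s*A) := by positivity
        have := Real.exp_pos (-(s/2) * A)
        apply mul_le_mul hexp (by gcongr) e1 e2
      have hrw : 2 / (s*A) * (s ^ δ / δ) = 2 * δ⁻¹ * s ^ (δ-1) * A⁻¹ := by
        rw [show δ - 1 = δ + (-1) by ring, Real.rpow_add hs, Real.rpow_neg_one]
        field_simp
      calc _ ≤ 2 / (s*A) * (s ^ δ / δ) := le_trans hb key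
      _ = 2 * δ⁻¹ * s ^ (δ-1) * A⁻¹ := hrw
      _ ≤ 2 * (min δ 1)⁻¹ * s ^ (δ-1) * A⁻¹ := by gcongr
    -- piece 2
    have P2 : ∫ σ in Set.Ico (s/2) s, Real.exp (-(s - σ) * A) * σ ^ (δ - 1)
        ≤ 2 * (min δ 1)⁻¹ * s ^ (δ - 1) * A⁻¹ := by
      have hptw : ∀ σ ∈ Set.Ico (s/2) s,
          Real.exp (-(s - σ) * A) * σ ^ (δ - 1)
            ≤ Real.exp (-(s - σ) * A) * (2 * s ^ (δ - 1)) := by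
        intro σ hσ
        have hσ0 : (0:ℝ) < σ := lt_of_lt_of_le (by linarith) hσ.1
        have hσb : σ ^ (δ - 1) ≤ 2 * s ^ (δ - 1) := by
          rcases le_total δ 1 with hδ1 | hδ1
          · have h1 : σ ^ (δ - 1) ≤ (s/2) ^ (δ - 1) :=
              Real.rpow_le_rpow_of_nonpos (by linarith) hσ.1 (by linarith)
            have h2 : (s/2 : ℝ) ^ (δ - 1) = s ^ (δ-1) / 2 ^ (δ-1) :=
              Real.div_rpow hs.le (by norm_num) (δ - 1)
            have h3 : (2:ℝ) ^ (-(δ-1)) ≤ 2 ^ (1:ℝ) :=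
              Real.rpow_le_rpow_of_exponent_le (by norm_num) (by linarith)
            rw [Real.rpow_one] at h3
            have h4 : ((2:ℝ) ^ (δ-1))⁻¹ ≤ 2 := by
              rwa [Real.rpow_neg (by norm_num)] at h3
            have h5 : (0:ℝ) < (2:ℝ) ^ (δ-1) := Real.rpow_pos_of_pos (by norm_num) _
            calc σ ^ (δ-1) ≤ s ^ (δ-1) / 2 ^ (δ-1) := by rw [← h2]; exact h1
            _ = s ^ (δ-1) * ((2:ℝ) ^ (δ-1))⁻¹ := by ring
            _ ≤ s ^ (δ-1) * 2 := by nlinarith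
            _ = 2 * s ^ (δ-1) := by ring
          · have h1 : σ ^ (δ - 1) ≤ s ^ (δ - 1) :=
              Real.rpow_le_rpow hσ0.le hσ.2.le (by linarith)
            nlinarith
        have he : (0:ℝ) ≤ Real.exp (-(s - σ) * A) := (Real.exp_pos _).le
        nlinarith
      have hb : ∫ σ in Set.Ico (s/2) s, Real.exp (-(s - σ) * A) * σ ^ (δ - 1)
          ≤ ∫ σ in Set.Ico (s/2) s, Real.exp (-(s - σ) * A) * (2 * s ^ (δ - 1)) := by
        apply setIntegral_mono_on hintIco _ measurableSet_Ico hptw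
        have hc : IntegrableOn
            (fun σ : ℝ => Real.exp (-(s - σ) * A) * (2 * s ^ (δ - 1)))
            (Set.Icc (s/2) s) :=
          ContinuousOn.integrableOn_compact isCompact_Icc (by fun_prop)
        exact hc.mono_set Set.Ico_subset_Icc_self
      have hev : ∫ σ in Set.Ico (s/2) s, Real.exp (-(s - σ) * A) ≤ A⁻¹ := by
        rw [MeasureTheory.integral_Ico_eq_integral_Ioo,
          ← MeasureTheory.integral_Ioc_eq_integral_Ioo,
          ← intervalIntegral.integral_of_le (by linarith : s/2 ≤ s)]
        have hfun : (fun σ : ℝ => Real.exp (-(s - σ) * A))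
            = fun σ => Real.exp (A * σ + -(s*A)) := by
          funext σ
          rw [show -(s - σ) * A = A * σ + -(s*A) by ring]
        rw [hfun, intervalIntegral.integral_comp_mul_add Real.exp hA.ne' (-(s*A)),
          integral_exp, smul_eq_mul]
        have h1 : A * s + -(s*A) = 0 := by ring
        rw [h1, Real.exp_zero]
        have h2 : (0:ℝ) < Real.exp (A * (s/2) + -(s*A)) := Real.exp_pos _
        have h3 : (0:ℝ) < A⁻¹ := by positivity
        nlinarith
      have hrw : ∫ σ in Set.Ico (s/2) s, Real.exp (-(s - σ) * A) * (2 * s ^ (δ - 1))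
          = (∫ σ in Set.Ico (s/2) s, Real.exp (-(s - σ) * A)) * (2 * s ^ (δ - 1)) := by
        rw [integral_mul_const]
      calc _ ≤ (∫ σ in Set.Ico (s/2) s, Real.exp (-(s - σ) * A)) * (2 * s ^ (δ - 1)) := by
            rw [← hrw]; exact hb
      _ ≤ A⁻¹ * (2 * s ^ (δ - 1)) := by
            apply mul_le_mul_of_nonneg_right hev (by positivity)
      _ = 2 * 1 * s ^ (δ - 1) * A⁻¹ := by ring
      _ ≤ 2 * (min δ 1)⁻¹ * s ^ (δ - 1) * A⁻¹ := by gcongr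
    have hfin : 2 * (min δ 1)⁻¹ * s ^ (δ-1) * A⁻¹ + 2 * (min δ 1)⁻¹ * s ^ (δ-1) * A⁻¹
        = 4 * (min δ 1)⁻¹ * s ^ (δ-1) * A⁻¹ := by ring
    linarith [P1, P2]
  -- final assembly
  have hrhs : s ^ (δ - b) = s ^ δ * s ^ (-b) := by
    rw [← Real.rpow_add hs]; ring_nf
  have hAb : (0:ℝ) < A ^ (-b) := Real.rpow_pos_of_pos hA _
  have hsb : (0:ℝ) < s ^ (-b) := Real.rpow_pos_of_pos hs _
  have hmul : s ^ (-b) * A ^ (-b) = (s*A) ^ (-b) := (Real.mul_rpow hs.le hA.le).symm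
  rcases le_total (s*A) 1 with hsa | hsa
  · -- small sA : use L1
    have h1 : (1:ℝ) ≤ (s*A) ^ (-b) :=
      Real.one_le_rpow_of_pos_of_le_one_of_nonpos (by positivity) hsa (by linarith)
    calc ∫ σ in Set.Ioo (0:ℝ) s, Real.exp (-(s - σ) * A) * σ ^ (δ - 1)
        ≤ δ⁻¹ * s ^ δ := L1
    _ ≤ (min δ 1)⁻¹ * s ^ δ := by gcongr
    _ = (min δ 1)⁻¹ * s ^ δ * 1 := by ring
    _ ≤ (min δ 1)⁻¹ * s ^ δ * (s*A) ^ (-b) :=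
        mul_le_mul_of_nonneg_left h1 (by positivity)
    _ ≤ 4 * ((min δ 1)⁻¹ * s ^ δ * (s*A) ^ (-b)) := by
        have h4 : (0:ℝ) ≤ (min δ 1)⁻¹ * s ^ δ * (s*A) ^ (-b) := by positivity
        linarith
    _ = 4 * (min δ 1)⁻¹ * (s ^ δ * (s*A) ^ (-b)) := by ring
    _ = 4 * (min δ 1)⁻¹ * A ^ (-b) * s ^ (δ - b) := by
        rw [hrhs, ← hmul]; ring
  · -- large sA : use L2
    have h1 : (s*A) ^ (-(1:ℝ)) ≤ (s*A) ^ (-b) :=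
      Real.rpow_le_rpow_of_exponent_le hsa (by linarith)
    rw [Real.rpow_neg_one, mul_inv] at h1
    have h2 : s ^ (δ - 1) * A⁻¹ ≤ s ^ δ * (s*A) ^ (-b) := by
      have : s ^ (δ-1) * A⁻¹ = s ^ δ * (s⁻¹ * A⁻¹) := by
        rw [show δ - 1 = δ + (-1) by ring, Real.rpow_add hs, Real.rpow_neg_one]; ring
      rw [this]
      apply mul_le_mul_of_nonneg_left h1 hsδ.le
    calc ∫ σ in Set.Ioo (0:ℝ) s, Real.exp (-(s - σ) * A) * σ ^ (δ - 1)
        ≤ 4 * (min δ 1)⁻¹ * s ^ (δ - 1) * A⁻¹ := L2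
    _ = 4 * (min δ 1)⁻¹ * (s ^ (δ-1) * A⁻¹) := by ring
    _ ≤ 4 * (min δ 1)⁻¹ * (s ^ δ * (s*A) ^ (-b)) :=
        mul_le_mul_of_nonneg_left h2 (by positivity)
    _ = 4 * (min δ 1)⁻¹ * A ^ (-b) * s ^ (δ - b) := by
        rw [hrhs, ← hmul]; ring
end

section
/- Let d ≥ 1 be an integer and let 0 < α < d, 0 < β < d with α + β > d. Then for every x ∈ ℝ^d with x ≠ 0, the integral ∫_{ℝ^d} |y|^{-α} |x-y|^{-β} dy converges and equals C(α,β,d) |x|^{d-α-β}, where C(α,β,d) = π^{d/2} Γ((d-α)/2) Γ((d-β)/2) Γ((α+β-d)/2) / ( Γ(α/2) Γ(β/2) Γ(d-(α+β)/2) ). -/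
/-!
Subordination: `r ^ (-α) = Γ(α/2)⁻¹ ∫₀^∞ s ^ (α/2 - 1) e^{-s r²} ds`. Writing both kernels this way
and integrating in `y` first, the Gaussian convolution
`∫ e^{-s|y|² - t|x-y|²} dy = (π/(s+t))^{d/2} e^{-st|x|²/(s+t)}` reduces the problem to a double
integral over `s, t > 0`. The substitution `t = s w` splits it into a Gamma integral in `s` and the
Beta integral `∫₀^∞ w^{a-1} (1+w)^{-(a+b)} dw = Γ(a)Γ(b)/Γ(a+b)`.
-/

open MeasureTheory Set Real

lemma lintegral_Ioi_rpow_mul_exp_neg_mul {c r : ℝ} (hc : 0 < c) (hr : 0 < r) :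
    ∫⁻ t in Ioi (0 : ℝ), ENNReal.ofReal (t ^ (c - 1) * exp (-(r * t))) =
      ENNReal.ofReal (r ^ (-c) * Gamma c) := by
  have hint : IntegrableOn (fun t : ℝ => t ^ (c - 1) * exp (-(r * t))) (Ioi 0) := by
    simpa [rpow_one, mul_comm] using
      integrableOn_rpow_mul_exp_neg_mul_rpow (s := c - 1) (by linarith) one_pos hr
  rw [← ofReal_integral_eq_lintegral_ofReal hint, integral_rpow_mul_exp_neg_mul_Ioi hc hr,
    one_div, inv_rpow hr.le, rpow_neg hr.le]
  filter_upwards [ae_restrict_mem measurableSet_Ioi] with t (ht : 0 < t)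
  positivity

lemma lintegral_Ioi_rpow_mul_exp_neg_mul_sq {α a : ℝ} (hα : 0 < α) (ha : 0 < a) :
    ∫⁻ s in Ioi (0 : ℝ), ENNReal.ofReal (s ^ (α / 2 - 1) * exp (-(s * a ^ 2))) =
      ENNReal.ofReal (a ^ (-α) * Gamma (α / 2)) := by
  simp_rw [mul_comm _ (a ^ 2)]
  rw [lintegral_Ioi_rpow_mul_exp_neg_mul (by positivity) (by positivity), ← rpow_natCast,
    ← rpow_mul ha.le]
  congr 3
  ring

lemma setLIntegral_Ioi_eq_comp_mul_left (g : ℝ → ENNReal) {b : ℝ} (hb : 0 < b) :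
    ∫⁻ x in Ioi (0 : ℝ), g x = ∫⁻ x in Ioi (0 : ℝ), ENNReal.ofReal b * g (b * x) := by
  have himage : (b * ·) '' Ioi (0 : ℝ) = Ioi 0 := by
    rw [image_mul_left_Ioi hb, mul_zero]
  have := lintegral_image_eq_lintegral_abs_deriv_mul (measurableSet_Ioi (a := 0))
    (fun x _ => ((hasDerivAt_id x).const_mul b).hasDerivWithinAt.congr_deriv (mul_one b))
    (mul_right_injective₀ hb.ne').injOn g
  simpa only [himage, id, abs_of_pos hb] using this

lemma lintegral_Ioi_rpow_mul_one_add_rpow_neg {p q : ℝ} (hp : 0 < p) (hq : 0 < q) :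
    ∫⁻ v in Ioi (0 : ℝ), ENNReal.ofReal (v ^ (p - 1) * (1 + v) ^ (-(p + q))) =
      ENNReal.ofReal (Gamma p * Gamma q / Gamma (p + q)) := by
  have hΓ := Gamma_pos_of_pos (add_pos hp hq)
  -- `Γ(p+q) (1+v)^{-(p+q)} = ∫ s^{p+q-1} e^{-(1+v)s} ds`; then integrate in `v` first.
  have key : (∫⁻ v in Ioi (0 : ℝ), ENNReal.ofReal (v ^ (p - 1) * (1 + v) ^ (-(p + q)))) *
      ENNReal.ofReal (Gamma (p + q)) = ENNReal.ofReal (Gamma p * Gamma q) := calc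
    _ = ∫⁻ v in Ioi (0 : ℝ), ∫⁻ s in Ioi (0 : ℝ),
          ENNReal.ofReal (v ^ (p - 1)) *
            ENNReal.ofReal (s ^ (p + q - 1) * exp (-((1 + v) * s))) := by
      rw [← lintegral_mul_const' _ _ ENNReal.ofReal_ne_top]
      refine setLIntegral_congr_fun measurableSet_Ioi fun v (hv : 0 < v) => ?_
      rw [lintegral_const_mul' _ _ ENNReal.ofReal_ne_top,
        lintegral_Ioi_rpow_mul_exp_neg_mul (add_pos hp hq) (by positivity),
        ← ENNReal.ofReal_mul (by positivity), ← ENNReal.ofReal_mul (by positivity), mul_assoc]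
    _ = ∫⁻ s in Ioi (0 : ℝ), ENNReal.ofReal (s ^ (p + q - 1) * exp (-(1 * s))) *
          ∫⁻ v in Ioi (0 : ℝ), ENNReal.ofReal (v ^ (p - 1) * exp (-(s * v))) := by
      rw [lintegral_lintegral_swap (by fun_prop)]
      refine setLIntegral_congr_fun measurableSet_Ioi fun s (hs : 0 < s) => ?_
      rw [← lintegral_const_mul' _ _ ENNReal.ofReal_ne_top]
      refine setLIntegral_congr_fun measurableSet_Ioi fun v (hv : 0 < v) => ?_
      rw [← ENNReal.ofReal_mul (by positivity), ← ENNReal.ofReal_mul (by positivity)]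
      congr 1
      rw [show -((1 + v) * s) = -(1 * s) + -(s * v) by ring, exp_add]
      ring
    _ = ∫⁻ s in Ioi (0 : ℝ), ENNReal.ofReal (Gamma p) *
          ENNReal.ofReal (s ^ (q - 1) * exp (-(1 * s))) := by
      refine setLIntegral_congr_fun measurableSet_Ioi fun s (hs : 0 < s) => ?_
      rw [lintegral_Ioi_rpow_mul_exp_neg_mul hp hs, ← ENNReal.ofReal_mul (by positivity),
        ← ENNReal.ofReal_mul (Gamma_pos_of_pos hp).le]
      congr 1
      have : s ^ (p + q - 1) * s ^ (-p) = s ^ (q - 1) := by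
        rw [← rpow_add hs]; ring_nf
      rw [← this]
      ring
    _ = ENNReal.ofReal (Gamma p * Gamma q) := by
      rw [lintegral_const_mul' _ _ ENNReal.ofReal_ne_top,
        lintegral_Ioi_rpow_mul_exp_neg_mul hq one_pos, one_rpow, one_mul,
        ← ENNReal.ofReal_mul (Gamma_pos_of_pos hp).le]
  rw [ENNReal.ofReal_div_of_pos hΓ, ENNReal.eq_div_iff (by simpa using hΓ) ENNReal.ofReal_ne_top,
    mul_comm]
  exact key

lemma lintegral_Ioi_Ioi_rpow_mul_exp_neg_mul_div_add {p q m R : ℝ} (hpm : p < m) (hqm : q < m)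
    (hm : m < p + q) (hR : 0 < R) :
    ∫⁻ s in Ioi (0 : ℝ), ∫⁻ t in Ioi (0 : ℝ),
        ENNReal.ofReal (s ^ (p - 1) * t ^ (q - 1) * (s + t) ^ (-m) * exp (-(s * t / (s + t) * R))) =
      ENNReal.ofReal (Gamma (p + q - m) * R ^ (m - p - q) *
        (Gamma (m - p) * Gamma (m - q) / Gamma (m - p + (m - q)))) := by
  have hγ : 0 < p + q - m := by linarith
  calc _ = ∫⁻ s in Ioi (0 : ℝ), ∫⁻ w in Ioi (0 : ℝ),
          ENNReal.ofReal (w ^ (q - 1) * (1 + w) ^ (-m) *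
            (s ^ (p + q - m - 1) * exp (-(w / (1 + w) * R * s)))) := by
        refine setLIntegral_congr_fun measurableSet_Ioi fun s (hs : 0 < s) => ?_
        rw [setLIntegral_Ioi_eq_comp_mul_left _ hs]
        refine setLIntegral_congr_fun measurableSet_Ioi fun w (hw : 0 < w) => ?_
        have hspow : s * s ^ (p - 1) * s ^ (q - 1) * s ^ (-m) = s ^ (p + q - m - 1) := by
          conv_lhs => enter [1, 1, 1]; rw [← rpow_one s]
          rw [← rpow_add hs, ← rpow_add hs, ← rpow_add hs]; ring_nf
        rw [← ENNReal.ofReal_mul hs.le, show s + s * w = s * (1 + w) by ring,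
          mul_rpow hs.le hw.le, mul_rpow hs.le (by positivity),
          show s * (s * w) / (s * (1 + w)) * R = w / (1 + w) * R * s by field_simp, ← hspow]
        ring_nf
    _ = ∫⁻ w in Ioi (0 : ℝ), ∫⁻ s in Ioi (0 : ℝ),
          ENNReal.ofReal (w ^ (q - 1) * (1 + w) ^ (-m)) *
            ENNReal.ofReal (s ^ (p + q - m - 1) * exp (-(w / (1 + w) * R * s))) := by
        rw [lintegral_lintegral_swap (by fun_prop)]
        refine setLIntegral_congr_fun measurableSet_Ioi fun w (hw : 0 < w) => ?_
        refine setLIntegral_congr_fun measurableSet_Ioi fun s (hs : 0 < s) => ?_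
        exact ENNReal.ofReal_mul (by positivity)
    _ = ∫⁻ w in Ioi (0 : ℝ), ENNReal.ofReal (Gamma (p + q - m) * R ^ (m - p - q)) *
          ENNReal.ofReal (w ^ (m - p - 1) * (1 + w) ^ (-((m - p) + (m - q)))) := by
        refine setLIntegral_congr_fun measurableSet_Ioi fun w (hw : 0 < w) => ?_
        have h1w : 0 < 1 + w := by linarith
        rw [lintegral_const_mul' _ _ ENNReal.ofReal_ne_top,
          lintegral_Ioi_rpow_mul_exp_neg_mul hγ (by positivity),
          ← ENNReal.ofReal_mul (by positivity), ← ENNReal.ofReal_mul (by positivity)]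
        congr 1
        rw [mul_rpow (by positivity) hR.le, div_rpow hw.le h1w.le, div_eq_mul_inv,
          ← rpow_neg h1w.le]
        have hw' : w ^ (q - 1) * w ^ (-(p + q - m)) = w ^ (m - p - 1) := by
          rw [← rpow_add hw]; ring_nf
        have h1w' : (1 + w) ^ (-m) * (1 + w) ^ (-(-(p + q - m))) =
            (1 + w) ^ (-((m - p) + (m - q))) := by
          rw [← rpow_add h1w]; ring_nf
        rw [← hw', ← h1w', show m - p - q = -(p + q - m) by ring]
        ring
    _ = _ := by
        rw [lintegral_const_mul' _ _ ENNReal.ofReal_ne_top,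
          lintegral_Ioi_rpow_mul_one_add_rpow_neg (by linarith) (by linarith),
          ← ENNReal.ofReal_mul (by have := Gamma_pos_of_pos hγ; positivity)]

lemma ofReal_rpow_neg_mul_rpow_neg_eq_lintegral {α β a b : ℝ} (hα : 0 < α) (hβ : 0 < β)
    (ha : 0 < a) (hb : 0 < b) :
    ENNReal.ofReal (a ^ (-α) * b ^ (-β)) =
      ENNReal.ofReal (Gamma (α / 2) * Gamma (β / 2))⁻¹ *
        ∫⁻ s in Ioi (0 : ℝ), ∫⁻ t in Ioi (0 : ℝ),
          ENNReal.ofReal (s ^ (α / 2 - 1) * t ^ (β / 2 - 1)) *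
            ENNReal.ofReal (exp (-(s * a ^ 2)) * exp (-(t * b ^ 2))) := by
  have hΓα := Gamma_pos_of_pos (half_pos hα)
  have hΓβ := Gamma_pos_of_pos (half_pos hβ)
  have hsplit : ∫⁻ s in Ioi (0 : ℝ), ∫⁻ t in Ioi (0 : ℝ),
      ENNReal.ofReal (s ^ (α / 2 - 1) * t ^ (β / 2 - 1)) *
        ENNReal.ofReal (exp (-(s * a ^ 2)) * exp (-(t * b ^ 2))) =
      ENNReal.ofReal (a ^ (-α) * Gamma (α / 2)) * ENNReal.ofReal (b ^ (-β) * Gamma (β / 2)) := by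
    rw [← lintegral_Ioi_rpow_mul_exp_neg_mul_sq hα ha,
      ← lintegral_mul_const' _ _ ENNReal.ofReal_ne_top]
    refine setLIntegral_congr_fun measurableSet_Ioi fun s (hs : 0 < s) => ?_
    rw [← lintegral_Ioi_rpow_mul_exp_neg_mul_sq hβ hb,
      ← lintegral_const_mul' _ _ ENNReal.ofReal_ne_top]
    refine setLIntegral_congr_fun measurableSet_Ioi fun t (ht : 0 < t) => ?_
    rw [← ENNReal.ofReal_mul (by positivity), ← ENNReal.ofReal_mul (by positivity)]
    congr 1
    ring
  rw [hsplit, ← ENNReal.ofReal_mul (by positivity), ← ENNReal.ofReal_mul (by positivity)]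
  congr 1
  field_simp

noncomputable def rieszConvolutionConst (n α β : ℝ) : ℝ :=
  π ^ (n / 2) * (Gamma ((n - α) / 2) * Gamma ((n - β) / 2) * Gamma ((α + β - n) / 2)) /
    (Gamma (α / 2) * Gamma (β / 2) * Gamma (n - (α + β) / 2))

lemma rieszConvolutionConst_pos {n α β : ℝ} (hα : 0 < α) (hαn : α < n) (hβ : 0 < β)
    (hβn : β < n) (hαβ : n < α + β) : 0 < rieszConvolutionConst n α β := by
  have := Gamma_pos_of_pos (half_pos hα)
  have := Gamma_pos_of_pos (half_pos hβ)
  have : 0 < Gamma ((n - α) / 2) := Gamma_pos_of_pos (by linarith)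
  have : 0 < Gamma ((n - β) / 2) := Gamma_pos_of_pos (by linarith)
  have : 0 < Gamma ((α + β - n) / 2) := Gamma_pos_of_pos (by linarith)
  have : 0 < Gamma (n - (α + β) / 2) := Gamma_pos_of_pos (by linarith)
  unfold rieszConvolutionConst
  positivity

section

variable {V : Type*} [NormedAddCommGroup V] [InnerProductSpace ℝ V]

lemma exp_neg_mul_norm_sq_mul_exp_neg_mul_norm_sub_sq (x y : V) {s t : ℝ} (hst : s + t ≠ 0) :
    exp (-(s * ‖y‖ ^ 2)) * exp (-(t * ‖x - y‖ ^ 2)) =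
      exp (-(s * t / (s + t) * ‖x‖ ^ 2)) * exp (-((s + t) * ‖y - (t / (s + t)) • x‖ ^ 2)) := by
  rw [← exp_add, ← exp_add, norm_sub_sq_real, norm_sub_sq_real, real_inner_smul_right,
    norm_smul, mul_pow, Real.norm_eq_abs, sq_abs, real_inner_comm]
  congr 1
  field_simp
  ring

variable [FiniteDimensional ℝ V] [MeasurableSpace V] [BorelSpace V]

lemma lintegral_exp_neg_mul_norm_sq_mul_exp_neg_mul_norm_sub_sq (x : V) {s t : ℝ}
    (hst : 0 < s + t) :
    ∫⁻ y, ENNReal.ofReal (exp (-(s * ‖y‖ ^ 2)) * exp (-(t * ‖x - y‖ ^ 2))) =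
      ENNReal.ofReal ((π / (s + t)) ^ ((Module.finrank ℝ V : ℝ) / 2) *
        exp (-(s * t / (s + t) * ‖x‖ ^ 2))) := by
  have hgauss := GaussianFourier.integral_rexp_neg_mul_sq_norm (V := V) hst
  have hint : Integrable (fun y : V => exp (-(s + t) * ‖y‖ ^ 2)) :=
    .of_integral_ne_zero (by rw [hgauss]; positivity)
  simp_rw [exp_neg_mul_norm_sq_mul_exp_neg_mul_norm_sub_sq x _ hst.ne',
    ENNReal.ofReal_mul (exp_pos _).le]
  rw [lintegral_const_mul' _ _ ENNReal.ofReal_ne_top,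
    lintegral_sub_right_eq_self (fun y => ENNReal.ofReal (exp (-((s + t) * ‖y‖ ^ 2)))),
    mul_comm]
  simp_rw [← neg_mul]
  rw [← ofReal_integral_eq_lintegral_ofReal hint (.of_forall fun _ => (exp_pos _).le), hgauss,
    ← ENNReal.ofReal_mul (by positivity)]

theorem lintegral_rpow_norm_mul_rpow_norm_sub {x : V} (hx : x ≠ 0) {α β : ℝ}
    (hα : 0 < α) (hαn : α < Module.finrank ℝ V) (hβ : 0 < β) (hβn : β < Module.finrank ℝ V)
    (hαβ : (Module.finrank ℝ V : ℝ) < α + β) :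
    ∫⁻ y, ENNReal.ofReal (‖y‖ ^ (-α) * ‖x - y‖ ^ (-β)) =
      ENNReal.ofReal (rieszConvolutionConst (Module.finrank ℝ V) α β *
        ‖x‖ ^ ((Module.finrank ℝ V : ℝ) - α - β)) := by
  set n : ℝ := (Module.finrank ℝ V : ℝ)
  have hxn : 0 < ‖x‖ := norm_pos_iff.mpr hx
  -- on the zero space `volume` is a Dirac mass
  have : Nontrivial V := ⟨x, 0, hx⟩
  calc _ = ∫⁻ y, ENNReal.ofReal (Gamma (α / 2) * Gamma (β / 2))⁻¹ *
          ∫⁻ s in Ioi (0 : ℝ), ∫⁻ t in Ioi (0 : ℝ),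
            ENNReal.ofReal (s ^ (α / 2 - 1) * t ^ (β / 2 - 1)) *
              ENNReal.ofReal (exp (-(s * ‖y‖ ^ 2)) * exp (-(t * ‖x - y‖ ^ 2))) := by
        refine lintegral_congr_ae ?_
        filter_upwards [Measure.ae_ne volume 0, Measure.ae_ne volume x] with y hy0 hyx
        exact ofReal_rpow_neg_mul_rpow_neg_eq_lintegral hα hβ (norm_pos_iff.mpr hy0)
          (norm_pos_iff.mpr (sub_ne_zero.mpr hyx.symm))
    _ = ENNReal.ofReal (Gamma (α / 2) * Gamma (β / 2))⁻¹ *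
          ∫⁻ s in Ioi (0 : ℝ), ∫⁻ t in Ioi (0 : ℝ), ∫⁻ y,
            ENNReal.ofReal (s ^ (α / 2 - 1) * t ^ (β / 2 - 1)) *
              ENNReal.ofReal (exp (-(s * ‖y‖ ^ 2)) * exp (-(t * ‖x - y‖ ^ 2))) := by
        rw [lintegral_const_mul' _ _ ENNReal.ofReal_ne_top,
          lintegral_lintegral_swap (Measurable.lintegral_prod_right (by fun_prop)).aemeasurable]
        congr 1
        refine lintegral_congr fun s => lintegral_lintegral_swap ?_
        fun_prop
    _ = ENNReal.ofReal (Gamma (α / 2) * Gamma (β / 2))⁻¹ *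
          ∫⁻ s in Ioi (0 : ℝ), ∫⁻ t in Ioi (0 : ℝ), ENNReal.ofReal (π ^ (n / 2)) *
            ENNReal.ofReal (s ^ (α / 2 - 1) * t ^ (β / 2 - 1) * (s + t) ^ (-(n / 2)) *
              exp (-(s * t / (s + t) * ‖x‖ ^ 2))) := by
        congr 1
        refine setLIntegral_congr_fun measurableSet_Ioi fun s (hs : 0 < s) => ?_
        refine setLIntegral_congr_fun measurableSet_Ioi fun t (ht : 0 < t) => ?_
        have hst : 0 < s + t := by linarith
        rw [lintegral_const_mul' _ _ ENNReal.ofReal_ne_top,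
          lintegral_exp_neg_mul_norm_sq_mul_exp_neg_mul_norm_sub_sq x hst,
          ← ENNReal.ofReal_mul (by positivity), ← ENNReal.ofReal_mul (by positivity),
          div_rpow pi_nonneg hst.le, rpow_neg hst.le]
        congr 1
        ring
    _ = _ := by
        simp_rw [lintegral_const_mul' _ _ ENNReal.ofReal_ne_top]
        rw [lintegral_Ioi_Ioi_rpow_mul_exp_neg_mul_div_add (by linarith) (by linarith) (by linarith)
          (by positivity)]
        have hΓα := Gamma_pos_of_pos (half_pos hα)
        have hΓβ := Gamma_pos_of_pos (half_pos hβ)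
        have hΓαβ : 0 < Gamma (n - (α + β) / 2) := Gamma_pos_of_pos (by linarith)
        rw [← ENNReal.ofReal_mul (by positivity), ← ENNReal.ofReal_mul (by positivity),
          ← rpow_natCast, ← rpow_mul hxn.le, rieszConvolutionConst]
        congr 1
        rw [show ((2 : ℕ) : ℝ) * (n / 2 - α / 2 - β / 2) = n - α - β by push_cast; ring,
          show α / 2 + β / 2 - n / 2 = (α + β - n) / 2 by ring,
          show n / 2 - α / 2 = (n - α) / 2 by ring, show n / 2 - β / 2 = (n - β) / 2 by ring,
          show (n - α) / 2 + (n - β) / 2 = n - (α + β) / 2 by ring]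
        field_simp

end

lemma integrable_and_integral_eq_of_lintegral_ofReal_eq {X : Type*} [MeasurableSpace X]
    {μ : Measure X} {f : X → ℝ} {c : ℝ} (hf : AEStronglyMeasurable f μ) (hf0 : 0 ≤ᵐ[μ] f)
    (hc : 0 ≤ c) (h : ∫⁻ a, ENNReal.ofReal (f a) ∂μ = ENNReal.ofReal c) :
    Integrable f μ ∧ ∫ a, f a ∂μ = c :=
  ⟨(lintegral_ofReal_ne_top_iff_integrable hf hf0).mp (h ▸ ENNReal.ofReal_ne_top),
    by rw [integral_eq_lintegral_of_nonneg_ae hf0 hf, h, ENNReal.toReal_ofReal hc]⟩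

theorem stmt_1_general (d : ℕ) (α β : ℝ)
    (hα0 : 0 < α) (hαd : α < d) (hβ0 : 0 < β) (hβd : β < d) (hαβ : (d : ℝ) < α + β)
    (x : EuclideanSpace ℝ (Fin d)) (hx : x ≠ 0) :
    Integrable (fun y : EuclideanSpace ℝ (Fin d) => ‖y‖ ^ (-α) * ‖x - y‖ ^ (-β)) volume ∧
    ∫ y : EuclideanSpace ℝ (Fin d), ‖y‖ ^ (-α) * ‖x - y‖ ^ (-β) =
      (Real.pi ^ ((d : ℝ) / 2) *
          (Real.Gamma (((d : ℝ) - α) / 2) * Real.Gamma (((d : ℝ) - β) / 2) *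
            Real.Gamma ((α + β - d) / 2)) /
        (Real.Gamma (α / 2) * Real.Gamma (β / 2) * Real.Gamma ((d : ℝ) - (α + β) / 2))) *
        ‖x‖ ^ ((d : ℝ) - α - β) := by
  have hV := lintegral_rpow_norm_mul_rpow_norm_sub hx hα0 (by simpa) hβ0 (by simpa) (by simpa)
  rw [finrank_euclideanSpace_fin] at hV
  exact integrable_and_integral_eq_of_lintegral_ofReal_eq (by fun_prop)
    (.of_forall fun y => by positivity)
    (mul_nonneg (rieszConvolutionConst_pos hα0 hαd hβ0 hβd hαβ).le (by positivity)) hV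

/-- Convolution of Riesz-type kernels:
For `d ≥ 1`, `0 < α < d`, `0 < β < d` with `α + β > d`, and `x ≠ 0` in `ℝ^d`,
the integral `∫ |y|^{-α} |x-y|^{-β} dy` converges and equals
`C(α,β,d) |x|^{d-α-β}` with the explicit Gamma-function constant. -/
theorem stmt_1 (d : ℕ) (hd : 1 ≤ d) (α β : ℝ)
    (hα0 : 0 < α) (hαd : α < d) (hβ0 : 0 < β) (hβd : β < d) (hαβ : (d : ℝ) < α + β)
    (x : EuclideanSpace ℝ (Fin d)) (hx : x ≠ 0) :
    Integrable (fun y : EuclideanSpace ℝ (Fin d) => ‖y‖ ^ (-α) * ‖x - y‖ ^ (-β)) volume ∧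
    ∫ y : EuclideanSpace ℝ (Fin d), ‖y‖ ^ (-α) * ‖x - y‖ ^ (-β) =
      (Real.pi ^ ((d : ℝ) / 2) *
          (Real.Gamma (((d : ℝ) - α) / 2) * Real.Gamma (((d : ℝ) - β) / 2) *
            Real.Gamma ((α + β - d) / 2)) /
        (Real.Gamma (α / 2) * Real.Gamma (β / 2) * Real.Gamma ((d : ℝ) - (α + β) / 2))) *
        ‖x‖ ^ ((d : ℝ) - α - β) :=
  stmt_1_general d α β hα0 hαd hβ0 hβd hαβ x hx
end

section
/- Let λ > 0, τ ≥ 1, and α = (λ/2)(1 + 1/τ). There is no twice continuously differentiable function X : [0,∞) → ℝ satisfying all of the following: X(t) > 0 for all t ≥ 0; X'(t) ≥ 0 for all t ≥ 0; X''(t) - (λ²/4)(1 - 1/τ)² X(t) ≥ (λ²/τ) e^{-αt} X(t)² for all t ≥ 0; X'(0)² ≥ (2λ²/(3τ)) X(0)³; and X(0) > (3/2)τ. -/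
/-!
With `b = λ²/τ`, the energy `X'² - (2b/3) e^{-αt} X³` is nondecreasing along the inequality
and nonnegative at `t = 0`, so `X' ≥ √(2b/3) e^{-αt/2} X^{3/2}`. Then
`X^{-1/2} - (√(2b/3)/α) e^{-αt/2}` is nonincreasing, and letting `t → ∞` with `X^{-1/2} > 0`
forces `(2b/3) X(0) ≤ α²`; but `X(0) > 3τ/2` gives `(2b/3) X(0) > λ² ≥ α²`.
-/

open Real Filter Set Topology

section Energy

variable {X X' X'' : ℝ → ℝ} {b α : ℝ} {n : ℕ}

lemma monotoneOn_energy (hb : 0 ≤ b) (hα : 0 ≤ α)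
    (hX : ∀ t, 0 ≤ t → HasDerivAt X (X' t) t) (hX' : ∀ t, 0 ≤ t → HasDerivAt X' (X'' t) t)
    (hpos : ∀ t, 0 ≤ t → 0 ≤ X t) (hmono : ∀ t, 0 ≤ t → 0 ≤ X' t)
    (hode : ∀ t, 0 ≤ t → b * exp (-α * t) * X t ^ n ≤ X'' t) :
    MonotoneOn (fun t => X' t ^ 2 - 2 * b / (n + 1) * exp (-α * t) * X t ^ (n + 1)) (Ici 0) := by
  have hE : ∀ t, 0 ≤ t → HasDerivAt
      (fun t => X' t ^ 2 - 2 * b / (n + 1) * exp (-α * t) * X t ^ (n + 1))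
      (2 * X' t * (X'' t - b * exp (-α * t) * X t ^ n) +
        2 * b / (n + 1) * α * exp (-α * t) * X t ^ (n + 1)) t := by
    intro t ht
    have hexp : HasDerivAt (fun s => exp (-α * s)) (exp (-α * t) * -α) t := by
      simpa using ((hasDerivAt_id t).const_mul (-α)).exp
    refine (((hX' t ht).pow 2).sub
      ((hexp.const_mul (2 * b / (n + 1))).mul ((hX t ht).pow (n + 1)))).congr_deriv ?_
    simp only [Pi.pow_apply]
    push_cast
    field_simp
    ring
  refine monotoneOn_of_hasDerivWithinAt_nonneg (convex_Ici 0)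
    (fun t ht => (hE t ht).continuousAt.continuousWithinAt)
    (fun t ht => (hE t (interior_subset ht)).hasDerivWithinAt) fun t ht => ?_
  have ht : 0 ≤ t := interior_subset ht
  exact add_nonneg
    (mul_nonneg (mul_nonneg zero_le_two (hmono t ht)) (sub_nonneg.2 (hode t ht)))
    (mul_nonneg (by positivity) (pow_nonneg (hpos t ht) _))

lemma sqrt_mul_exp_mul_rpow_le_deriv (hb : 0 ≤ b) (hα : 0 ≤ α)
    (hX : ∀ t, 0 ≤ t → HasDerivAt X (X' t) t) (hX' : ∀ t, 0 ≤ t → HasDerivAt X' (X'' t) t)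
    (hpos : ∀ t, 0 ≤ t → 0 ≤ X t) (hmono : ∀ t, 0 ≤ t → 0 ≤ X' t)
    (hode : ∀ t, 0 ≤ t → b * exp (-α * t) * X t ^ n ≤ X'' t)
    (hinit : 2 * b / (n + 1) * X 0 ^ (n + 1) ≤ X' 0 ^ 2) :
    ∀ t, 0 ≤ t → √(2 * b / (n + 1)) * exp (-(α / 2) * t) * X t ^ (((n : ℝ) + 1) / 2) ≤ X' t := by
  intro t ht
  have henergy := monotoneOn_energy hb hα hX hX' hpos hmono hode self_mem_Ici ht ht
  simp only [mul_zero, exp_zero, mul_one] at henergy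
  refine (pow_le_pow_iff_left₀ (mul_nonneg (by positivity) (rpow_nonneg (hpos t ht) _))
    (hmono t ht) two_ne_zero).1 ?_
  calc (√(2 * b / (n + 1)) * exp (-(α / 2) * t) * X t ^ (((n : ℝ) + 1) / 2)) ^ 2
      = 2 * b / (n + 1) * exp (-α * t) * X t ^ (n + 1) := by
        rw [mul_pow, mul_pow, sq_sqrt (by positivity), ← exp_nat_mul, ← rpow_natCast,
          ← rpow_mul (hpos t ht),
          show ((n : ℝ) + 1) / 2 * (2 : ℕ) = ((n + 1 : ℕ) : ℝ) by push_cast; ring, rpow_natCast]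
        ring_nf
    _ ≤ X' t ^ 2 := by linarith

end Energy

lemma mul_rpow_sub_one_le_of_deriv_ge {X X' : ℝ → ℝ} {k a p : ℝ} (hp : 1 ≤ p) (ha : 0 < a)
    (hX : ∀ t, 0 ≤ t → HasDerivAt X (X' t) t) (hpos : ∀ t, 0 ≤ t → 0 < X t)
    (hgrowth : ∀ t, 0 ≤ t → k * exp (-a * t) * X t ^ p ≤ X' t) :
    (p - 1) * k * X 0 ^ (p - 1) ≤ a := by
  set G := fun t => X t ^ (1 - p) - (p - 1) * k / a * exp (-a * t)
  have hG : ∀ t, 0 ≤ t →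
      HasDerivAt G ((1 - p) * (X' t * (X t ^ p)⁻¹ - k * exp (-a * t))) t := by
    intro t ht
    have hexp : HasDerivAt (fun s => exp (-a * s)) (exp (-a * t) * -a) t := by
      simpa using ((hasDerivAt_id t).const_mul (-a)).exp
    refine (((hX t ht).rpow_const (p := 1 - p) (Or.inl (hpos t ht).ne')).sub
      (hexp.const_mul ((p - 1) * k / a))).congr_deriv ?_
    rw [sub_sub_cancel_left, rpow_neg (hpos t ht).le]
    field_simp
    ring
  have hanti : AntitoneOn G (Ici 0) := antitoneOn_of_hasDerivWithinAt_nonpos (convex_Ici 0)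
    (fun t ht => (hG t ht).continuousAt.continuousWithinAt)
    (fun t ht => (hG t (interior_subset ht)).hasDerivWithinAt) fun t ht => by
      have ht : 0 ≤ t := interior_subset ht
      have hXp : 0 < X t ^ p := rpow_pos_of_pos (hpos t ht) p
      refine mul_nonpos_of_nonpos_of_nonneg (by linarith) (sub_nonneg.2 ?_)
      rw [← div_eq_mul_inv, le_div_iff₀ hXp]
      exact hgrowth t ht
  have hlim : Tendsto (fun t => -((p - 1) * k / a * exp (-a * t))) atTop (𝓝 0) := by
    simpa using ((tendsto_exp_atBot.comp
      (tendsto_id.const_mul_atTop_of_neg (neg_lt_zero.2 ha))).const_mul ((p - 1) * k / a)).neg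
  have hG0 : 0 ≤ G 0 := le_of_tendsto hlim <| eventually_atTop.2 ⟨0, fun t ht =>
    (hanti self_mem_Ici ht ht).trans' <| by
      simp only [G]; linarith [rpow_nonneg (hpos t ht).le (1 - p)]⟩
  have hX0 := hpos 0 le_rfl
  simp only [G, mul_zero, exp_zero, mul_one, sub_nonneg] at hG0
  calc (p - 1) * k * X 0 ^ (p - 1) = (p - 1) * k / a * X 0 ^ (p - 1) * a := by
        field_simp
    _ ≤ X 0 ^ (1 - p) * X 0 ^ (p - 1) * a := by gcongr
    _ = a := by rw [← rpow_add hX0]; simp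

lemma sq_half_mul_one_add_inv_lt {lam τ x : ℝ} (hlam : 0 < lam) (hτ : 1 ≤ τ)
    (hx : 3 / 2 * τ < x) : (lam / 2 * (1 + 1 / τ)) ^ 2 < 2 * lam ^ 2 / (3 * τ) * x := by
  have hτ0 : 0 < τ := by linarith
  have hinv : 1 / τ ≤ 1 := (div_le_one hτ0).2 hτ
  calc (lam / 2 * (1 + 1 / τ)) ^ 2 ≤ lam ^ 2 := by
        gcongr
        nlinarith
    _ = 2 * lam ^ 2 / (3 * τ) * (3 / 2 * τ) := by field_simp
    _ < 2 * lam ^ 2 / (3 * τ) * x := by gcongr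

/-- the ODE inequality core of Proposition 5.1: for `λ > 0`, `τ ≥ 1`
and `α = (λ/2)(1+1/τ)`, there is no `C²` function `X : [0,∞) → ℝ` (formalized as a `C²`
function on `ℝ` whose relevant properties hold on `[0,∞)`) which is positive,
nondecreasing, satisfies `X'' - (λ²/4)(1-1/τ)² X ≥ (λ²/τ) e^{-αt} X²` on `[0,∞)`,
together with `X'(0)² ≥ (2λ²/(3τ)) X(0)³` and `X(0) > (3/2)τ`. -/
theorem stmt_17 (lam τ : ℝ) (hlam : 0 < lam) (hτ : 1 ≤ τ) :
    ¬ ∃ X : ℝ → ℝ, ContDiff ℝ 2 X ∧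
      (∀ t : ℝ, 0 ≤ t → 0 < X t) ∧
      (∀ t : ℝ, 0 ≤ t → 0 ≤ deriv X t) ∧
      (∀ t : ℝ, 0 ≤ t →
        lam ^ 2 / τ * Real.exp (-(lam / 2 * (1 + 1 / τ)) * t) * X t ^ 2 ≤
          deriv (deriv X) t - lam ^ 2 / 4 * (1 - 1 / τ) ^ 2 * X t) ∧
      2 * lam ^ 2 / (3 * τ) * X 0 ^ 3 ≤ (deriv X 0) ^ 2 ∧
      3 / 2 * τ < X 0 := by
  rintro ⟨X, hX, hpos, hmono, hode, hinit, hX0⟩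
  set α := lam / 2 * (1 + 1 / τ)
  have hτ0 : 0 < τ := by linarith
  have hα : 0 < α := by positivity
  have hD1 : ∀ t, HasDerivAt X (deriv X t) t := fun t =>
    (hX.differentiable (by norm_num) t).hasDerivAt
  have hD2 : ∀ t, HasDerivAt (deriv X) (deriv (deriv X) t) t := fun t =>
    (hX.differentiable_deriv_two t).hasDerivAt
  have hode' : ∀ t, 0 ≤ t → lam ^ 2 / τ * exp (-α * t) * X t ^ 2 ≤ deriv (deriv X) t := by
    intro t ht
    have := hpos t ht
    linarith [hode t ht, show 0 ≤ lam ^ 2 / 4 * (1 - 1 / τ) ^ 2 * X t by positivity]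
  have hgrowth := sqrt_mul_exp_mul_rpow_le_deriv (n := 2) (by positivity) hα.le
    (fun t _ => hD1 t) (fun t _ => hD2 t) (fun t ht => (hpos t ht).le) hmono hode'
    (by convert hinit using 2; push_cast; ring)
  have hblow := mul_rpow_sub_one_le_of_deriv_ge (by norm_num) (by positivity)
    (fun t _ => hD1 t) hpos hgrowth
  rw [show ((2 : ℕ) + 1 : ℝ) / 2 - 1 = 1 / 2 by norm_num, ← sqrt_eq_rpow, mul_assoc,
    ← sqrt_mul (by positivity)] at hblow
  have hsq : 2 * (lam ^ 2 / τ) / ((2 : ℕ) + 1) * X 0 ≤ α ^ 2 :=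
    (sqrt_le_left hα.le).1 (by linarith)
  rw [show 2 * (lam ^ 2 / τ) / ((2 : ℕ) + 1) = 2 * lam ^ 2 / (3 * τ) by push_cast; ring] at hsq
  exact hsq.not_gt (sq_half_mul_one_add_inv_lt hlam hτ hX0)
end

section
/- Let λ > 0 and τ ≥ 2, and set α = (λ/2)(1 + 1/τ). There are no functions J : [0,∞) → ℝ twice continuously differentiable and I : [0,∞) → ℝ satisfying all of the following: J(t) ≥ 0 and I(t) ≥ 0 for all t ≥ 0; J'(t) = -(λ/τ) J(t) + (1/τ) I(t) for all t ≥ 0; J''(t) + λ(1 + 1/τ) J'(t) + (λ²/τ) J(t) ≥ (λ²/τ) J(t)² for all t ≥ 0; J(0) ≥ (3/2)τ; and I(0) ≥ (2/3) λ J(0)². -/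
/-!
Clearing denominators, the second-order inequality reads
`τ J'' + λ(τ+1) J' + λ² J ≥ λ² J²`, and the initial data give `J'(0) > 0` and
`J'(0)² > c J(0)³` with `c = 2λ²/(27τ)`. Two first-touching-time arguments propagate these:
at the first zero of `J'` the function `J` is still at least `J(0) > 1`, which forces `J'' > 0`;
at the first time where `J'² = c J³`, the bound `J ≥ 3τ/2` forces `(J'² - c J³)' > 0`.
Hence `J' ≥ √c J^{3/2}` on `[0, ∞)`, so `J^{-1/2}` decreases at rate at least `√c / 2` and would
become negative in finite time.
-/

open Set Topology

theorem monotoneOn_of_hasDerivAt_nonneg' {f f' : ℝ → ℝ} {D : Set ℝ} (hD : Convex ℝ D)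
    (hf : ∀ x, HasDerivAt f (f' x) x) (hf' : ∀ x ∈ interior D, 0 ≤ f' x) : MonotoneOn f D :=
  monotoneOn_of_hasDerivWithinAt_nonneg hD (fun x _ => (hf x).continuousAt.continuousWithinAt)
    (fun x _ => (hf x).hasDerivWithinAt) hf'

theorem HasDerivAt.nonpos_of_eventually_nhdsLT_le {f : ℝ → ℝ} {d t : ℝ} (hf : HasDerivAt f d t)
    (hmin : ∀ᶠ s in 𝓝[<] t, f t ≤ f s) : d ≤ 0 := by
  refine le_of_tendsto
    ((hasDerivWithinAt_iff_tendsto_slope' (s := Iio t) (lt_irrefl t)).mp hf.hasDerivWithinAt) ?_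
  filter_upwards [hmin, self_mem_nhdsWithin] with s hfs hst
  rw [slope_def_field]
  exact div_nonpos_of_nonneg_of_nonpos (sub_nonneg.mpr hfs) (sub_nonpos.mpr (le_of_lt hst))

theorem pos_of_deriv_pos_at_first_zero {f f' : ℝ → ℝ} {a : ℝ} (hf : ContinuousOn f (Ici a))
    (hf' : ∀ t, a < t → HasDerivAt f (f' t) t) (ha : 0 < f a)
    (hzero : ∀ t, a < t → f t = 0 → (∀ s ∈ Ico a t, 0 < f s) → 0 < f' t)
    {t : ℝ} (ht : a ≤ t) : 0 < f t := by
  by_contra! hft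
  set S := Icc a t ∩ f ⁻¹' Iic 0
  have hSbdd : BddBelow S := ⟨a, fun s hs => hs.1.1⟩
  have hS : sInf S ∈ S :=
    (hf.mono Icc_subset_Ici_self).preimage_isClosed_of_isClosed isClosed_Icc isClosed_Iic
      |>.csInf_mem ⟨t, ⟨ht, le_rfl⟩, hft⟩ hSbdd
  set t₁ := sInf S
  have hbefore : ∀ s ∈ Ico a t₁, 0 < f s := fun s hs => by
    by_contra! hfs
    exact hs.2.not_ge (csInf_le hSbdd ⟨⟨hs.1, hs.2.le.trans hS.1.2⟩, hfs⟩)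
  have hat₁ : a < t₁ := hS.1.1.lt_of_ne fun h => (h ▸ hS.2 : f a ≤ 0).not_gt ha
  have hzero₁ : f t₁ = 0 := by
    obtain ⟨s, hs, hfs⟩ := intermediate_value_Icc' hS.1.1 (hf.mono Icc_subset_Ici_self)
      ⟨hS.2, ha.le⟩
    have : t₁ ≤ s := csInf_le hSbdd ⟨⟨hs.1, hs.2.trans hS.1.2⟩, hfs.le⟩
    rwa [← le_antisymm hs.2 this]
  refine (hzero t₁ hat₁ hzero₁ hbefore).not_ge ((hf' t₁ hat₁).nonpos_of_eventually_nhdsLT_le ?_)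
  filter_upwards [Ioo_mem_nhdsLT hat₁] with s hs
  exact hzero₁ ▸ (hbefore s ⟨hs.1.le, hs.2⟩).le

theorem exists_sq_deriv_lt_mul_cube {y y' : ℝ → ℝ} {c : ℝ} (hc : 0 < c)
    (hy : ∀ t, HasDerivAt y (y' t) t) (hy0 : 0 < y 0) (hy' : ∀ t, 0 ≤ t → 0 ≤ y' t) :
    ∃ t, 0 ≤ t ∧ y' t ^ 2 < c * y t ^ 3 := by
  by_contra! h
  have hpos : ∀ t, 0 ≤ t → 0 < y t := fun t ht =>
    hy0.trans_le <| monotoneOn_of_hasDerivAt_nonneg' (convex_Ici 0) hy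
      (fun s hs => hy' s (interior_subset hs)) self_mem_Ici ht ht
  set G : ℝ → ℝ := fun u => (√(y u))⁻¹
  have hG : ∀ t, 0 ≤ t → HasDerivAt G (-(1 / (2 * √(y t)) * y' t) / √(y t) ^ 2) t := fun t ht =>
    ((Real.hasDerivAt_sqrt (hpos t ht).ne').comp t (hy t)).inv (Real.sqrt_pos.mpr (hpos t ht)).ne'
  have hG' : ∀ t, 0 ≤ t → -(1 / (2 * √(y t)) * y' t) / √(y t) ^ 2 ≤ -(√c / 2) := by
    intro t ht
    have hyt := hpos t ht
    have hgrowth : √c * (√(y t) * y t) ≤ y' t := by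
      refine (pow_le_pow_iff_left₀ (by positivity) (hy' t ht) two_ne_zero).mp ?_
      rw [mul_pow, mul_pow, Real.sq_sqrt hc.le, Real.sq_sqrt hyt.le]
      linarith [h t ht]
    have hsy := Real.sqrt_pos.mpr hyt
    rw [Real.sq_sqrt hyt.le, neg_div, neg_le_neg_iff, le_div_iff₀ hyt]
    field_simp
    linarith
  have hT : 0 ≤ 2 * G 0 / √c := by positivity
  have hdecay := (convex_Ici 0).image_sub_le_mul_sub_of_deriv_le
    (fun t ht => (hG t ht).continuousAt.continuousWithinAt)
    (fun t ht => (hG t (interior_subset ht)).differentiableAt.differentiableWithinAt)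
    (fun t ht => (hG t (interior_subset ht)).deriv ▸ hG' t (interior_subset ht))
    0 self_mem_Ici _ hT hT
  have hGT : 0 < G (2 * G 0 / √c) := inv_pos.mpr (Real.sqrt_pos.mpr (hpos _ hT))
  have hc' := Real.sqrt_pos.mpr hc
  field_simp at hdecay
  linarith

theorem moment_initial_bounds {lam τ A s I : ℝ} (hlam : 0 < lam) (hτ : 2 ≤ τ)
    (hs : s = -(lam / τ) * A + 1 / τ * I) (hA : 3 / 2 * τ ≤ A) (hI : 2 / 3 * lam * A ^ 2 ≤ I) :
    0 < s ∧ 2 * lam ^ 2 * A ^ 3 < 27 * τ * s ^ 2 := by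
  have hτ0 : 0 < τ := by linarith
  have hA3 : 3 ≤ A := by nlinarith
  have hslope : lam * A * (2 * A - 3) ≤ 3 * τ * s := by
    rw [hs]
    field_simp
    nlinarith
  have hP : 0 < lam * A * (2 * A - 3) := by
    have : 0 < 2 * A - 3 := by linarith
    positivity
  have hs0 : 0 < s := by nlinarith
  refine ⟨hs0, ?_⟩
  have hsq : (lam * A * (2 * A - 3)) ^ 2 ≤ (3 * τ * s) ^ 2 := pow_le_pow_left₀ hP.le hslope 2
  have hcube : 2 * τ * A < 3 * (2 * A - 3) ^ 2 := by nlinarith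
  refine lt_of_mul_lt_mul_left ?_ hτ0.le
  nlinarith [mul_lt_mul_of_pos_left hcube (by positivity : 0 < lam ^ 2 * A ^ 2)]

/-- Where `27 τ J'² = 2 λ² J³`, this makes `(27 τ J'² - 2 λ² J³)' = 6 J' (9 τ J'' - λ² J²)`
positive. -/
theorem moment_second_deriv_gt_at_touch {lam τ A s B : ℝ} (hlam : 0 < lam) (hτ : 2 ≤ τ)
    (hA : 3 * τ ≤ 2 * A) (hs : 0 < s) (hsq : 27 * τ * s ^ 2 = 2 * lam ^ 2 * A ^ 3)
    (hB : lam ^ 2 * A ^ 2 ≤ τ * B + lam * (τ + 1) * s + lam ^ 2 * A) :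
    lam ^ 2 * A ^ 2 < 9 * τ * B := by
  have hτ0 : 0 < τ := by linarith
  have hA3 : 3 ≤ A := by nlinarith
  have hpoly : 6 * (τ + 1) ^ 2 * A < τ * (8 * A - 9) ^ 2 := by
    nlinarith [mul_nonneg (by linarith : (0:ℝ) ≤ 2 * A - 3 * τ) (by linarith : (0:ℝ) ≤ τ - 2),
      mul_nonneg (by linarith : (0:ℝ) ≤ 2 * A - 3 * τ) (by linarith : (0:ℝ) ≤ A - 3),
      mul_nonneg (by linarith : (0:ℝ) ≤ A - 3) (by linarith : (0:ℝ) ≤ τ - 2)]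
  have hrhs : 0 ≤ lam * A * (8 * A - 9) := by
    have : 0 ≤ 8 * A - 9 := by linarith
    positivity
  have hlin : 9 * (τ + 1) * s < lam * A * (8 * A - 9) := by
    refine (pow_lt_pow_iff_left₀ (by positivity) hrhs two_ne_zero).mp ?_
    refine lt_of_mul_lt_mul_left ?_ (by positivity : 0 ≤ 27 * τ)
    nlinarith [mul_lt_mul_of_pos_left hpoly (by positivity : 0 < 27 * lam ^ 2 * A ^ 2)]
  nlinarith [mul_lt_mul_of_pos_left hlin hlam]

section MomentInequality

variable {lam τ : ℝ} {J J' J'' : ℝ → ℝ}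

theorem moment_deriv_pos (hlam : 0 < lam) (hτ : 0 ≤ τ) (hJ : ∀ t, HasDerivAt J (J' t) t)
    (hJ' : ∀ t, HasDerivAt J' (J'' t) t)
    (hineq : ∀ t, 0 ≤ t → lam ^ 2 * J t ^ 2 ≤ τ * J'' t + lam * (τ + 1) * J' t + lam ^ 2 * J t)
    (hJ0 : 1 < J 0) (hJ'0 : 0 < J' 0) {t : ℝ} (ht : 0 ≤ t) : 0 < J' t := by
  refine pos_of_deriv_pos_at_first_zero (fun t _ => (hJ' t).continuousAt.continuousWithinAt)
    (fun t _ => hJ' t) hJ'0 (fun t ht hzero hbefore => ?_) ht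
  have hJt : 1 < J t := hJ0.trans_le <| monotoneOn_of_hasDerivAt_nonneg' (convex_Icc 0 t) hJ
    (fun s hs => (hbefore s (Ioo_subset_Ico_self (by rwa [interior_Icc] at hs))).le)
    ⟨le_rfl, ht.le⟩ ⟨ht.le, le_rfl⟩ ht.le
  have h := hineq t ht.le
  rw [hzero] at h
  nlinarith [mul_pos (pow_pos hlam 2) (mul_pos (by linarith : 0 < J t) (sub_pos.mpr hJt))]

theorem moment_cube_lt_sq_deriv (hlam : 0 < lam) (hτ : 2 ≤ τ) (hJ : ∀ t, HasDerivAt J (J' t) t)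
    (hJ' : ∀ t, HasDerivAt J' (J'' t) t)
    (hineq : ∀ t, 0 ≤ t → lam ^ 2 * J t ^ 2 ≤ τ * J'' t + lam * (τ + 1) * J' t + lam ^ 2 * J t)
    (hJ0 : 3 * τ ≤ 2 * J 0) (hD0 : 2 * lam ^ 2 * J 0 ^ 3 < 27 * τ * J' 0 ^ 2)
    (hJ'pos : ∀ t, 0 ≤ t → 0 < J' t) {t : ℝ} (ht : 0 ≤ t) :
    2 * lam ^ 2 * J t ^ 3 < 27 * τ * J' t ^ 2 := by
  have hD : ∀ t, HasDerivAt (fun u => 27 * τ * J' u ^ 2 - 2 * lam ^ 2 * J u ^ 3)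
      (6 * J' t * (9 * τ * J'' t - lam ^ 2 * J t ^ 2)) t := fun t =>
    ((((hJ' t).pow 2).const_mul _).sub (((hJ t).pow 3).const_mul _)).congr_deriv (by ring)
  refine sub_pos.mp <| pos_of_deriv_pos_at_first_zero
    (fun t _ => (hD t).continuousAt.continuousWithinAt) (fun t _ => hD t) (sub_pos.mpr hD0)
    (fun t ht hzero _ => ?_) ht
  have hJt : J 0 ≤ J t := monotoneOn_of_hasDerivAt_nonneg' (convex_Ici 0) hJ
    (fun s hs => (hJ'pos s (interior_subset hs)).le) self_mem_Ici ht.le ht.le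
  have hB := moment_second_deriv_gt_at_touch hlam hτ (by linarith) (hJ'pos t ht.le)
    (by linarith [hzero]) (hineq t ht.le)
  exact mul_pos (mul_pos (by norm_num) (hJ'pos t ht.le)) (by linarith)

end MomentInequality

/-- the moment differential inequalities of Proposition 5.1: for
`λ > 0` and `τ ≥ 2`, there are no functions `J` (twice continuously differentiable,
formalized as `C²` on `ℝ` with the relevant properties holding on `[0,∞)`) and `I`,
both nonnegative on `[0,∞)`, with `J' = -(λ/τ) J + (1/τ) I`,
`J'' + λ(1+1/τ) J' + (λ²/τ) J ≥ (λ²/τ) J²` on `[0,∞)`, `J(0) ≥ (3/2)τ` and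
`I(0) ≥ (2/3) λ J(0)²`. -/
theorem stmt_18 (lam τ : ℝ) (hlam : 0 < lam) (hτ : 2 ≤ τ) :
    ¬ ∃ (J I : ℝ → ℝ), ContDiff ℝ 2 J ∧
      (∀ t : ℝ, 0 ≤ t → 0 ≤ J t) ∧
      (∀ t : ℝ, 0 ≤ t → 0 ≤ I t) ∧
      (∀ t : ℝ, 0 ≤ t → deriv J t = -(lam / τ) * J t + 1 / τ * I t) ∧
      (∀ t : ℝ, 0 ≤ t →
        lam ^ 2 / τ * J t ^ 2 ≤
          deriv (deriv J) t + lam * (1 + 1 / τ) * deriv J t + lam ^ 2 / τ * J t) ∧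
      3 / 2 * τ ≤ J 0 ∧
      2 / 3 * lam * J 0 ^ 2 ≤ I 0 := by
  rintro ⟨J, I, hJC, -, -, hODE, hIneq, hJ0, hI0⟩
  have hτ0 : 0 < τ := by linarith
  have hJ'C : ContDiff ℝ 1 (deriv J) := (contDiff_succ_iff_deriv.mp (by exact hJC)).2.2
  have hJ : ∀ t, HasDerivAt J (deriv J t) t := fun t =>
    ((hJC.differentiable two_ne_zero) t).hasDerivAt
  have hJ' : ∀ t, HasDerivAt (deriv J) (deriv (deriv J) t) t := fun t =>
    ((hJ'C.differentiable one_ne_zero) t).hasDerivAt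
  have hineq : ∀ t, 0 ≤ t → lam ^ 2 * J t ^ 2 ≤
      τ * deriv (deriv J) t + lam * (τ + 1) * deriv J t + lam ^ 2 * J t := fun t ht => by
    have h := mul_le_mul_of_nonneg_left (hIneq t ht) hτ0.le
    field_simp at h
    linarith
  obtain ⟨hJ'0, hD0⟩ := moment_initial_bounds hlam hτ (hODE 0 le_rfl) hJ0 hI0
  have hJ'pos : ∀ t, 0 ≤ t → 0 < deriv J t :=
    fun t => moment_deriv_pos hlam hτ0.le hJ hJ' hineq (by nlinarith) hJ'0
  obtain ⟨t, ht, hlt⟩ := exists_sq_deriv_lt_mul_cube (by positivity : 0 < 2 * lam ^ 2 / (27 * τ))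
    hJ (by nlinarith) fun t ht => (hJ'pos t ht).le
  have hD := moment_cube_lt_sq_deriv hlam hτ hJ hJ' hineq (by linarith) hD0 hJ'pos ht
  rw [div_mul_eq_mul_div, lt_div_iff₀ (by positivity)] at hlt
  linarith
end

section
/- Let λ > 0, τ > 0, and α = (λ/2)(1 + 1/τ). Let X : [0,∞) → ℝ be twice continuously differentiable with X(t) ≥ 0 and X'(t) ≥ 0 for all t ≥ 0, and suppose X''(t) ≥ (λ²/τ) e^{-αt} X(t)² for all t ≥ 0. Then for every t ≥ 0, X'(t)² - X'(0)² ≥ (2λ²/(3τ)) ( e^{-αt} X(t)³ - X(0)³ ). -/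
/-!
Multiply `X'' ≥ k e^{-αt} X²` by `2X' ≥ 0`: the energy `X'² - (2k/3) e^{-αt} X³` then has derivative
`2X'(X'' - k e^{-αt} X²) + (2kα/3) e^{-αt} X³ ≥ 0`, so it is nondecreasing on `[0, ∞)`, and comparing
its values at `0` and `t` is the claim.
-/

open Real Set

lemma hasDerivAt_sq_sub_mul_exp_mul_pow_three {X V : ℝ → ℝ} {v a : ℝ} (c α : ℝ) {t : ℝ}
    (hX : HasDerivAt X v t) (hV : HasDerivAt V a t) :
    HasDerivAt (fun s => V s ^ 2 - c * (exp (-α * s) * X s ^ 3))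
      (2 * V t * a - c * (exp (-α * t) * (3 * X t ^ 2 * v - α * X t ^ 3))) t := by
  have hexp : HasDerivAt (fun s => exp (-α * s)) (exp (-α * t) * (-α)) t := by
    simpa using ((hasDerivAt_id t).const_mul (-α)).exp
  refine ((hV.fun_pow 2).fun_sub ((hexp.fun_mul (hX.fun_pow 3)).const_mul c)).congr_deriv ?_
  simp only [Nat.cast_ofNat]
  ring

theorem sq_deriv_sub_le_of_deriv_deriv_ge {X : ℝ → ℝ} {k α : ℝ} (hk : 0 ≤ k) (hα : 0 ≤ α)
    (hd : Differentiable ℝ X) (hd' : Differentiable ℝ (deriv X))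
    (hX : ∀ t, 0 ≤ t → 0 ≤ X t) (hX' : ∀ t, 0 ≤ t → 0 ≤ deriv X t)
    (hineq : ∀ t, 0 ≤ t → k * exp (-α * t) * X t ^ 2 ≤ deriv (deriv X) t)
    {t : ℝ} (ht : 0 ≤ t) :
    2 * k / 3 * (exp (-α * t) * X t ^ 3 - X 0 ^ 3) ≤ deriv X t ^ 2 - deriv X 0 ^ 2 := by
  set c := 2 * k / 3 with hc
  have hE : ∀ s, HasDerivAt (fun s => deriv X s ^ 2 - c * (exp (-α * s) * X s ^ 3))
      (2 * deriv X s * deriv (deriv X) s -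
        c * (exp (-α * s) * (3 * X s ^ 2 * deriv X s - α * X s ^ 3))) s := fun s =>
    hasDerivAt_sq_sub_mul_exp_mul_pow_three c α (hd s).hasDerivAt (hd' s).hasDerivAt
  have hmono : MonotoneOn (fun s => deriv X s ^ 2 - c * (exp (-α * s) * X s ^ 3)) (Ici 0) := by
    refine monotoneOn_of_hasDerivWithinAt_nonneg (convex_Ici 0)
      (fun s _ => (hE s).continuousAt.continuousWithinAt) (fun s _ => (hE s).hasDerivWithinAt) ?_
    intro s hs
    rw [interior_Ici, mem_Ioi] at hs
    have hXs := hX s hs.le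
    have hX's := hX' s hs.le
    have hforce := mul_le_mul_of_nonneg_right (hineq s hs.le) hX's
    have hdecay : 0 ≤ c * α * (exp (-α * s) * X s ^ 3) := by positivity
    have hsplit : c * (exp (-α * s) * (3 * X s ^ 2 * deriv X s - α * X s ^ 3)) =
        2 * (k * exp (-α * s) * X s ^ 2 * deriv X s) - c * α * (exp (-α * s) * X s ^ 3) := by
      rw [hc]; ring
    linarith
  have h := hmono self_mem_Ici (mem_Ici.mpr ht) ht
  simp only [mul_zero, exp_zero, one_mul] at h
  linarith

/-- the energy-type integral inequality in the Kaplan moment blowup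
argument: if `X` is `C²`, nonnegative and nondecreasing on `[0,∞)` with
`X'' ≥ (λ²/τ) e^{-αt} X²` there, where `α = (λ/2)(1+1/τ)`, then for all `t ≥ 0`,
`X'(t)² - X'(0)² ≥ (2λ²/(3τ)) (e^{-αt} X(t)³ - X(0)³)`. -/
theorem stmt_19 (lam τ : ℝ) (hlam : 0 < lam) (hτ : 0 < τ) (X : ℝ → ℝ)
    (hX : ContDiff ℝ 2 X)
    (hX0 : ∀ t : ℝ, 0 ≤ t → 0 ≤ X t)
    (hX' : ∀ t : ℝ, 0 ≤ t → 0 ≤ deriv X t)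
    (hineq : ∀ t : ℝ, 0 ≤ t →
      lam ^ 2 / τ * Real.exp (-(lam / 2 * (1 + 1 / τ)) * t) * X t ^ 2 ≤
        deriv (deriv X) t) :
    ∀ t : ℝ, 0 ≤ t →
      2 * lam ^ 2 / (3 * τ) *
          (Real.exp (-(lam / 2 * (1 + 1 / τ)) * t) * X t ^ 3 - X 0 ^ 3) ≤
        (deriv X t) ^ 2 - (deriv X 0) ^ 2 := by
  intro t ht
  obtain ⟨hd, -, hd'⟩ := contDiff_succ_iff_deriv.mp (show ContDiff ℝ (1 + 1) X from hX)
  have h := sq_deriv_sub_le_of_deriv_deriv_ge (k := lam ^ 2 / τ) (by positivity) (by positivity)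
    hd (hd'.differentiable one_ne_zero) hX0 hX' hineq ht
  convert h using 2
  ring
end
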